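/- arXiv:2111.09588 — 2 statements merged into one kernel-verified Lean document; each statement's English description precedes it below -/
import Mathlib

section
/- Let P be a finite connected flat poset (height one) and C = {a,b,v,w} a 4-crown contained in P. Then C is a retract of P. -/
/-! Every point of a flat poset is minimal or maximal, and every strict comparability goes from a
minimal point to a non-minimal one. So collapsing every minimal point other than `b` onto `a`
and every non-minimal point other than `w` onto `v` is monotone, and it fixes the crown. -/

def ConnectedPoset (α : Type*) [PartialOrder α] : Prop :=
  ∀ a b : α, Relation.ReflTransGen (fun u v : α => u ≤ v ∨ v ≤ u) a b

/-- A poset is flat iff it has height one. -/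
def IsFlatPoset (α : Type*) [PartialOrder α] : Prop :=
  (∀ z : α, IsMin z ∨ IsMax z) ∧ ∃ u v : α, u < v

/-- `{a,b,v,w}` is a 4-crown: exactly the strict comparabilities
`a<v, a<w, b<v, b<w`. -/
def Is4Crown {α : Type*} [PartialOrder α] (a b v w : α) : Prop :=
  a < v ∧ a < w ∧ b < v ∧ b < w ∧ ¬ a ≤ b ∧ ¬ b ≤ a ∧ ¬ v ≤ w ∧ ¬ w ≤ v

section CrownRetraction

open Classical

variable {α : Type*} [PartialOrder α] {a b v w : α}

theorem isMin_of_lt_of_isMin_or_isMax (hflat : ∀ z : α, IsMin z ∨ IsMax z) {x y : α}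
    (h : x < y) : IsMin x :=
  (hflat x).resolve_right (not_isMax_of_lt h)

noncomputable def crownRetraction (a b v w : α) (z : α) : α :=
  if z = b then b else if z = w then w else if IsMin z then a else v

theorem crownRetraction_mem (z : α) : crownRetraction a b v w z ∈ ({a, b, v, w} : Set α) := by
  unfold crownRetraction
  split_ifs <;> simp

theorem crownRetraction_of_isMin {z : α} (hw : ¬ IsMin w) (hz : IsMin z) :
    crownRetraction a b v w z = a ∨ crownRetraction a b v w z = b := by
  have hzw : z ≠ w := by rintro rfl; exact hw hz
  unfold crownRetraction
  split_ifs <;> simp_all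

theorem crownRetraction_of_not_isMin {z : α} (hb : IsMin b) (hz : ¬ IsMin z) :
    crownRetraction a b v w z = v ∨ crownRetraction a b v w z = w := by
  have hzb : z ≠ b := by rintro rfl; exact hz hb
  unfold crownRetraction
  split_ifs <;> simp_all

theorem crownRetraction_monotone (hflat : ∀ z : α, IsMin z ∨ IsMax z)
    (hcrown : Is4Crown a b v w) : Monotone (crownRetraction a b v w) := by
  obtain ⟨hav, haw, hbv, hbw, -⟩ := hcrown
  intro x y hxy
  rcases hxy.eq_or_lt with rfl | hlt
  · exact le_rfl
  have hx := crownRetraction_of_isMin (a := a) (b := b) (v := v) (not_isMin_of_lt haw)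
    (isMin_of_lt_of_isMin_or_isMax hflat hlt)
  have hy := crownRetraction_of_not_isMin (a := a) (v := v) (w := w)
    (isMin_of_lt_of_isMin_or_isMax hflat hbv) (not_isMin_of_lt hlt)
  rcases hx with hx | hx <;> rcases hy with hy | hy <;> rw [hx, hy] <;> exact le_of_lt ‹_›

theorem crownRetraction_eq_self (hflat : ∀ z : α, IsMin z ∨ IsMax z)
    (hcrown : Is4Crown a b v w) {z : α} (hz : z ∈ ({a, b, v, w} : Set α)) :
    crownRetraction a b v w z = z := by
  obtain ⟨hav, haw, hbv, hbw, hab, -, hvw, -⟩ := hcrown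
  have ha : IsMin a := isMin_of_lt_of_isMin_or_isMax hflat hav
  have hv : ¬ IsMin v := not_isMin_of_lt hav
  have hab' : a ≠ b := fun h => hab h.le
  have hvw' : v ≠ w := fun h => hvw h.le
  simp only [Set.mem_insert_iff, Set.mem_singleton_iff] at hz
  rcases hz with rfl | rfl | rfl | rfl <;> unfold crownRetraction
  · simp [hab', haw.ne, ha]
  · simp
  · simp [hbv.ne', hvw', hv]
  · simp [hbw.ne']

end CrownRetraction

theorem stmt10_general {α : Type*} [PartialOrder α]
    (hflat : IsFlatPoset α)
    (a b v w : α) (hcrown : Is4Crown a b v w) :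
    ∃ r : α → α, Monotone r ∧ (∀ z, r (r z) = r z) ∧
      Set.range r = ({a, b, v, w} : Set α) := by
  have hfix : ∀ z ∈ ({a, b, v, w} : Set α), crownRetraction a b v w z = z :=
    fun _ => crownRetraction_eq_self hflat.1 hcrown
  refine ⟨crownRetraction a b v w, crownRetraction_monotone hflat.1 hcrown,
    fun z => hfix _ (crownRetraction_mem z), ?_⟩
  exact (Set.range_subset_iff.2 crownRetraction_mem).antisymm fun z hz => ⟨z, hfix z hz⟩

/-- a 4-crown contained in a finite connected flat poset is a
retract. -/
theorem stmt10 {α : Type*} [PartialOrder α] [Fintype α]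
    (hconn : ConnectedPoset α) (hflat : IsFlatPoset α)
    (a b v w : α) (hcrown : Is4Crown a b v w) :
    ∃ r : α → α, Monotone r ∧ (∀ z, r (r z) = r z) ∧
      Set.range r = ({a, b, v, w} : Set α) :=
  stmt10_general hflat a b v w hcrown
end

section
/- Let P be a finite connected flat poset, C an n-crown in P, and x, y ∈ C with x <_P y. Suppose C has minimal size among crowns of P containing both x and y (every crown containing x and y has at least n points). Let P⁻ be the poset obtained from P by deleting the single relation (x,y), and for z ∈ P let d(z) be the least length of a fence in P⁻ containing both x and z. Then the map r : P → C defined by r(z) = the unique c ∈ C with d(c) = d(z) if d(z) ≤ n, and r(z) = y otherwise, is a retraction of P onto C. -/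
/-- Comparability of two (distinct) points. -/
def Comp {α : Type*} [PartialOrder α] (x y : α) : Prop := x ≠ y ∧ (x ≤ y ∨ y ≤ x)

/-- `S` is a crown: at least 4 points and its comparability graph is a cycle
(2-regular and connected). -/
def IsCrown {α : Type*} [PartialOrder α] (S : Set α) : Prop :=
  4 ≤ S.ncard ∧
  (∀ x ∈ S, {y | y ∈ S ∧ Comp x y}.ncard = 2) ∧
  ∀ x ∈ S, ∀ y ∈ S,
    Relation.ReflTransGen (fun u v : α => u ∈ S ∧ v ∈ S ∧ Comp u v) x y

/-- The order relation of `P⁻ = (X, ≤_P ∖ {(x,y)})`. -/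
def Rminus {α : Type*} [PartialOrder α] (x y : α) (u v : α) : Prop :=
  u ≤ v ∧ ¬ (u = x ∧ v = y)

/-- Comparability with respect to an arbitrary order relation `R`. -/
def CompR {α : Type*} (R : α → α → Prop) (u v : α) : Prop :=
  u ≠ v ∧ (R u v ∨ R v u)

/-- `f : Fin (k+1) → α` enumerates a fence of length `k` for the relation `R`:
its points are distinct, consecutive points are comparable, and non-consecutive
points are incomparable (the comparability graph is a path). -/
def IsFenceSeq {α : Type*} (R : α → α → Prop) (k : ℕ) (f : Fin (k + 1) → α) : Prop :=
  Function.Injective f ∧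
  (∀ i : Fin k, CompR R (f i.castSucc) (f i.succ)) ∧
  (∀ i j : Fin (k + 1), (i : ℕ) + 1 < (j : ℕ) → ¬ CompR R (f i) (f j))

open Function Set

section

variable {α : Type*}

def IsFence (R : α → α → Prop) (k : ℕ) (g : ℕ → α) : Prop :=
  InjOn g (Iic k) ∧ (∀ i < k, CompR R (g i) (g (i + 1))) ∧
    ∀ i j, i + 1 < j → j ≤ k → ¬ CompR R (g i) (g j)

def fenceLengths (R : α → α → Prop) (a b : α) : Set ℕ :=
  {k | ∃ f : Fin (k + 1) → α, IsFenceSeq R k f ∧ a ∈ range f ∧ b ∈ range f}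

def IsFenceDist (R : α → α → Prop) (a : α) (d : α → ℕ) : Prop :=
  ∀ z, IsLeast (fenceLengths R a z) (d z)

section Fence

variable {R : α → α → Prop} {k : ℕ} {g : ℕ → α}

theorem CompR.symm {u v : α} (h : CompR R u v) : CompR R v u := ⟨h.1.symm, h.2.symm⟩

theorem isFenceSeq_iff_isFence : IsFenceSeq R k (fun i => g i) ↔ IsFence R k g := by
  constructor
  · rintro ⟨hinj, hcons, hchord⟩
    refine ⟨fun i hi j hj h => ?_, fun i hi => hcons ⟨i, hi⟩,
      fun i j hij hj => hchord ⟨i, by omega⟩ ⟨j, by omega⟩ hij⟩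
    exact congrArg Fin.val (hinj (a₁ := ⟨i, Nat.lt_succ_of_le hi⟩)
      (a₂ := ⟨j, Nat.lt_succ_of_le hj⟩) h)
  · rintro ⟨hinj, hcons, hchord⟩
    exact ⟨fun i j h => Fin.ext (hinj (Nat.le_of_lt_succ i.isLt) (Nat.le_of_lt_succ j.isLt) h),
      fun i => hcons i i.isLt, fun i j hij => hchord i j hij (Nat.le_of_lt_succ j.isLt)⟩

theorem IsFence.compR_iff (hg : IsFence R k g) {i j : ℕ} (hi : i ≤ k) (hj : j ≤ k) :
    CompR R (g i) (g j) ↔ i + 1 = j ∨ j + 1 = i := by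
  constructor
  · intro h
    rcases lt_trichotomy (i + 1) j with hij | hij | hij
    · exact absurd h (hg.2.2 i j hij hj)
    · exact Or.inl hij
    rcases lt_trichotomy (j + 1) i with hji | hji | hji
    · exact absurd h.symm (hg.2.2 j i hji hi)
    · exact Or.inr hji
    · exact absurd (congrArg g (by omega : i = j)) h.1
  · rintro (rfl | rfl)
    · exact hg.2.1 i (by omega)
    · exact (hg.2.1 j (by omega)).symm

theorem IsFence.window (hg : IsFence R k g) {a l : ℕ} (hal : a + l ≤ k) :
    IsFence R l (fun i => g (a + i)) :=
  ⟨fun i hi j hj h => Nat.add_left_cancel (hg.1 (mem_Iic.2 (by simp only [mem_Iic] at hi; omega))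
      (mem_Iic.2 (by simp only [mem_Iic] at hj; omega)) h),
    fun i hi => hg.2.1 (a + i) (by omega),
    fun i j hij hj => hg.2.2 (a + i) (a + j) (by omega) (by omega)⟩

theorem IsFence.reverse (hg : IsFence R k g) : IsFence R k (fun i => g (k - i)) := by
  refine ⟨fun i hi j hj h => ?_, fun i hi => ?_, fun i j hij hj h => ?_⟩
  · have := hg.1 (mem_Iic.2 (Nat.sub_le k i)) (mem_Iic.2 (Nat.sub_le k j)) h
    simp only [mem_Iic] at hi hj
    omega
  · have := (hg.2.1 (k - (i + 1)) (by omega)).symm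
    rwa [show k - (i + 1) + 1 = k - i by omega] at this
  · exact hg.2.2 (k - j) (k - i) (by omega) (by omega) h.symm

theorem IsFence.update_succ (hg : IsFence R k g) {i : ℕ} (hi : i ≤ k) {v : α}
    (hc : CompR R (g i) v) (hfar : ∀ j < i, g j ≠ v ∧ ¬ CompR R (g j) v) :
    IsFence R (i + 1) (update g (i + 1) v) := by
  have hne : ∀ j ≤ i, g j ≠ v := fun j hj =>
    (eq_or_lt_of_le hj).elim (fun h => h ▸ hc.1) fun h => (hfar j h).1
  refine ⟨fun p hp q hq h => ?_, fun j hj => ?_, fun p q hpq hq => ?_⟩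
  · simp only [mem_Iic, update_apply] at hp hq h
    split_ifs at h with h1 h2 h2
    · omega
    · exact absurd h.symm (hne q (by omega))
    · exact absurd h (hne p (by omega))
    · exact hg.1 (mem_Iic.2 (by omega)) (mem_Iic.2 (by omega)) h
  · simp only [update_apply]
    split_ifs with h1 h2 h2
    · omega
    · omega
    · obtain rfl : j = i := by omega
      exact hc
    · exact hg.2.1 j (by omega)
  · simp only [update_apply]
    split_ifs with h1 h2 h2
    · omega
    · omega
    · exact (hfar p (by omega)).2
    · exact hg.2.2 p q hpq (by omega)

theorem IsFence.mem_fenceLengths (hg : IsFence R k g) {i j : ℕ} (hi : i ≤ k) (hj : j ≤ k)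
    {a b : α} (ha : g i = a) (hb : g j = b) : k ∈ fenceLengths R a b :=
  ⟨fun i => g i, isFenceSeq_iff_isFence.2 hg, ⟨⟨i, by omega⟩, ha⟩, ⟨⟨j, by omega⟩, hb⟩⟩

theorem exists_isFence_of_mem_fenceLengths {a b : α} (h : k ∈ fenceLengths R a b) :
    ∃ g : ℕ → α, IsFence R k g ∧ ∃ i ≤ k, ∃ j ≤ k, g i = a ∧ g j = b := by
  obtain ⟨f, hf, ⟨i, rfl⟩, ⟨j, rfl⟩⟩ := h
  have hfg : f = fun i : Fin (k + 1) => f ⟨min i k, by omega⟩ :=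
    funext fun i => congrArg f (Fin.ext (min_eq_left (by omega)).symm)
  refine ⟨fun n => f ⟨min n k, by omega⟩, isFenceSeq_iff_isFence.1 (hfg ▸ hf),
    i, by omega, j, by omega, ?_, ?_⟩ <;> exact congrArg f (Fin.ext (min_eq_left (by omega)))

theorem exists_isFence_of_isLeast {a b : α} (h : IsLeast (fenceLengths R a b) k) :
    ∃ g : ℕ → α, IsFence R k g ∧ g 0 = a ∧ g k = b := by
  have ends : ∀ g : ℕ → α, IsFence R k g → ∀ i j, i ≤ j → j ≤ k → g i = a → g j = b →
      ∃ g : ℕ → α, IsFence R k g ∧ g 0 = a ∧ g k = b := by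
    intro g hg i j hij hjk ha hb
    have := h.2 ((hg.window (a := i) (l := j - i) (by omega)).mem_fenceLengths (Nat.zero_le _)
      le_rfl (by simpa using ha) (by rwa [Nat.add_sub_cancel' hij]))
    obtain rfl : i = 0 := by omega
    obtain rfl : j = k := by omega
    exact ⟨g, hg, ha, hb⟩
  obtain ⟨g, hg, i, hi, j, hj, ha, hb⟩ := exists_isFence_of_mem_fenceLengths h.1
  rcases le_total i j with hij | hji
  · exact ends g hg i j hij hj ha hb
  · exact ends _ hg.reverse (k - i) (k - j) (by omega) (by omega)
      (by rwa [Nat.sub_sub_self hi]) (by rwa [Nat.sub_sub_self hj])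

theorem IsFence.injective_fin {R : α → α → Prop} {k : ℕ} {g : ℕ → α} (hg : IsFence R k g) :
    Injective fun i : Fin (k + 1) => g i :=
  fun i j h => Fin.ext (hg.1 (mem_Iic.2 (by omega)) (mem_Iic.2 (by omega)) h)

end Fence

namespace IsFenceDist

variable {R : α → α → Prop} {a : α} {d : α → ℕ} (hd : IsFenceDist R a d)
include hd

theorem exists_isFence (z : α) : ∃ g : ℕ → α, IsFence R (d z) g ∧ g 0 = a ∧ g (d z) = z :=
  exists_isFence_of_isLeast (hd z)

theorem le_of_isFence {k : ℕ} {g : ℕ → α} (hg : IsFence R k g) (h0 : g 0 = a) {j : ℕ}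
    (hj : j ≤ k) : d (g j) ≤ j :=
  (hd (g j)).2 ((hg.window (a := 0) (l := j) (by omega)).mem_fenceLengths (Nat.zero_le _) le_rfl
    (by simpa using h0) (by simp))

theorem apply_self : d a = 0 := by
  have hg : IsFence R 0 (fun _ => a) :=
    ⟨fun i hi j hj _ => by simp only [mem_Iic] at hi hj; omega, fun i hi => absurd hi (by omega),
      fun i j hij hj => by omega⟩
  exact Nat.le_zero.1 (hd.le_of_isFence hg rfl le_rfl)

theorem le_succ_of_compR {u v : α} (h : CompR R u v) : d v ≤ d u + 1 := by
  classical
  obtain ⟨g, hg, h0, hu⟩ := hd.exists_isFence u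
  -- cut a shortest fence to `u` at its first point that is `v` or comparable to `v`
  have hex : ∃ i, g i = v ∨ CompR R (g i) v := ⟨d u, Or.inr (by rwa [hu])⟩
  have hi : Nat.find hex ≤ d u := Nat.find_min' hex (Or.inr (by rwa [hu]))
  rcases Nat.find_spec hex with hv | hc
  · exact hv ▸ (hd.le_of_isFence hg h0 hi).trans (by omega)
  · have hg' := hg.update_succ hi hc fun j hj => not_or.1 (Nat.find_min hex hj)
    have := hd.le_of_isFence hg' (by simpa [update_apply] using h0) le_rfl
    rw [update_self] at this
    omega

theorem le_add_of_chain {p : ℕ → α} {l : ℕ} (hp : ∀ t < l, CompR R (p t) (p (t + 1))) :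
    d (p l) ≤ d (p 0) + l ∧ d (p 0) ≤ d (p l) + l := by
  induction l with
  | zero => simp
  | succ l ih =>
    have := ih fun t ht => hp t (by omega)
    have h₁ := hd.le_succ_of_compR (hp l (by omega))
    have h₂ := hd.le_succ_of_compR (hp l (by omega)).symm
    omega

end IsFenceDist

section Flat

variable [PartialOrder α]

theorem IsFlatPoset.isMin_of_lt (hP : IsFlatPoset α) {u v : α} (h : u < v) : IsMin u :=
  (hP.1 u).resolve_right (not_isMax_of_lt h)

theorem IsFlatPoset.isMin_iff_not_isMin (hP : IsFlatPoset α) {u v : α} (hne : u ≠ v)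
    (h : u ≤ v ∨ v ≤ u) : IsMin u ↔ ¬ IsMin v := by
  rcases h with h | h
  · have hlt := lt_of_le_of_ne h hne
    exact iff_of_true (hP.isMin_of_lt hlt) (not_isMin_of_lt hlt)
  · have hlt := lt_of_le_of_ne h hne.symm
    exact iff_of_false (not_isMin_of_lt hlt) (not_not.2 (hP.isMin_of_lt hlt))

variable {R : α → α → Prop} (hP : IsFlatPoset α) (hR : ∀ u v, R u v → u ≤ v)
include hP hR

theorem IsFence.isMin_iff {k : ℕ} {g : ℕ → α} (hg : IsFence R k g) {i : ℕ} (hi : i ≤ k) :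
    IsMin (g i) ↔ (IsMin (g 0) ↔ Even i) := by
  induction i with
  | zero => simp
  | succ i ih =>
    have hc := hg.2.1 i (by omega)
    have := hP.isMin_iff_not_isMin hc.1 (hc.2.imp (hR _ _) (hR _ _))
    rw [Nat.even_add_one]
    have := ih (by omega)
    tauto

theorem IsFenceDist.isMin_iff_even {a : α} {d : α → ℕ} (hd : IsFenceDist R a d) (ha : IsMin a)
    (z : α) : IsMin z ↔ Even (d z) := by
  obtain ⟨g, hg, h0, hz⟩ := hd.exists_isFence z
  simpa only [hz, h0, iff_true_left ha] using hg.isMin_iff hP hR le_rfl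

end Flat

section Order

variable [PartialOrder α]

theorem Comp.symm {u v : α} (h : Comp u v) : Comp v u := ⟨h.1.symm, h.2.symm⟩

theorem comp_of_lt {u v : α} (h : u < v) : Comp u v := ⟨h.ne, Or.inl h.le⟩

theorem comp_iff_compR_rminus {x y u v : α} (hxy : Comp x y) :
    Comp u v ↔ CompR (Rminus x y) u v ∨ (u = x ∧ v = y) ∨ (u = y ∧ v = x) := by
  constructor
  · intro h
    by_cases h₁ : u = x ∧ v = y
    · exact Or.inr (Or.inl h₁)
    by_cases h₂ : u = y ∧ v = x
    · exact Or.inr (Or.inr h₂)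
    exact Or.inl ⟨h.1, h.2.imp (fun h => ⟨h, h₁⟩) fun h => ⟨h, fun h' => h₂ h'.symm⟩⟩
  · rintro (h | ⟨rfl, rfl⟩ | ⟨rfl, rfl⟩)
    · exact ⟨h.1, h.2.imp And.left And.left⟩
    · exact hxy
    · exact hxy.symm

theorem isCrown_range_of_cyclic {m : ℕ} (hm : 3 ≤ m) {h : Fin (m + 1) → α} (hinj : Injective h)
    (hadj : ∀ i j, Comp (h i) (h j) ↔ j = i + 1 ∨ i = j + 1) : IsCrown (range h) := by
  refine ⟨?_, ?_, ?_⟩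
  · rw [ncard_range_of_injective hinj, Nat.card_eq_fintype_card, Fintype.card_fin]
    omega
  · rintro _ ⟨i, rfl⟩
    have hnbrs : {w | w ∈ range h ∧ Comp (h i) w} = {h (i + 1), h (i - 1)} := by
      ext w
      constructor
      · rintro ⟨⟨j, rfl⟩, hc⟩
        rcases (hadj i j).1 hc with rfl | rfl
        · exact Or.inl rfl
        · exact Or.inr (by simp)
      · rintro (rfl | rfl)
        · exact ⟨mem_range_self _, (hadj _ _).2 (Or.inl rfl)⟩
        · exact ⟨mem_range_self _, (hadj _ _).2 (Or.inr (sub_add_cancel i 1).symm)⟩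
    rw [hnbrs, ncard_pair (hinj.ne ?_)]
    intro heq
    have hval := congrArg Fin.val heq
    rw [Fin.val_add_one, Fin.coe_sub_one] at hval
    have hi := i.isLt
    split_ifs at hval with h₁ h₂ h₂ <;> rw [Fin.ext_iff] at h₁ h₂ <;>
      simp only [Fin.val_last, Fin.val_zero] at h₁ h₂ <;> omega
  · have hreach : ∀ i : Fin (m + 1),
        Relation.ReflTransGen (fun u v => u ∈ range h ∧ v ∈ range h ∧ Comp u v) (h 0) (h i) ∧
        Relation.ReflTransGen (fun u v => u ∈ range h ∧ v ∈ range h ∧ Comp u v) (h i) (h 0) := by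
      refine Fin.induction ⟨.refl, .refl⟩ fun i ih => ?_
      have hc : Comp (h i.castSucc) (h i.succ) := (hadj _ _).2 (Or.inl Fin.coeSucc_eq_succ.symm)
      exact ⟨ih.1.tail ⟨mem_range_self _, mem_range_self _, hc⟩,
        ih.2.head ⟨mem_range_self _, mem_range_self _, hc.symm⟩⟩
    rintro _ ⟨i, rfl⟩ _ ⟨j, rfl⟩
    exact (hreach i).2.trans (hreach j).1

theorem isCrown_of_isFence_rminus {x y : α} (hxy : Comp x y) {m : ℕ} (hm : 3 ≤ m) {g : ℕ → α}
    (hg : IsFence (Rminus x y) m g) (h0 : g 0 = x) (hy : g m = y) :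
    IsCrown (range fun i : Fin (m + 1) => g i) := by
  refine isCrown_range_of_cyclic hm hg.injective_fin fun i j => ?_
  have hgeq : ∀ a b, a ≤ m → b ≤ m → (g a = g b ↔ a = b) := fun a b ha hb => hg.1.eq_iff ha hb
  have hi := i.isLt
  have hj := j.isLt
  rw [comp_iff_compR_rminus hxy, hg.compR_iff (by omega) (by omega), ← h0, ← hy]
  simp (disch := omega) only [hgeq, Fin.ext_iff, Fin.val_add_one]
  split_ifs with h₁ h₂ h₂ <;> simp only [Fin.val_last] at h₁ h₂ <;> omega

open Classical in
noncomputable def otherNeighbor (C : Set α) (a b : α) : α :=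
  if h : ∃ w, w ∈ C ∧ Comp a w ∧ w ≠ b then h.choose else a

noncomputable def crownWalk (C : Set α) (x y : α) : ℕ → α
  | 0 => x
  | 1 => otherNeighbor C x y
  | k + 2 => otherNeighbor C (crownWalk C x y (k + 1)) (crownWalk C x y k)

namespace IsCrown

variable {C : Set α} (hC : IsCrown C)
include hC

theorem otherNeighbor_spec {a b : α} (ha : a ∈ C) (hb : b ∈ C) (hab : Comp a b) :
    otherNeighbor C a b ∈ C ∧ Comp a (otherNeighbor C a b) ∧ otherNeighbor C a b ≠ b ∧
      ∀ v ∈ C, Comp a v → v = b ∨ v = otherNeighbor C a b := by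
  obtain ⟨p, q, hpq, hnbrs⟩ := ncard_eq_two.1 (hC.2.1 a ha)
  have hmem : ∀ v, v ∈ C → Comp a v → v = p ∨ v = q := fun v hv hav => by
    simpa [hnbrs] using (show v ∈ {w | w ∈ C ∧ Comp a w} from ⟨hv, hav⟩)
  have hp : p ∈ C ∧ Comp a p := by simpa [← hnbrs] using (show p ∈ ({p, q} : Set α) by simp)
  have hq : q ∈ C ∧ Comp a q := by simpa [← hnbrs] using (show q ∈ ({p, q} : Set α) by simp)
  have hex : ∃ w, w ∈ C ∧ Comp a w ∧ w ≠ b := by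
    rcases hmem b hb hab with rfl | rfl
    · exact ⟨q, hq.1, hq.2, hpq.symm⟩
    · exact ⟨p, hp.1, hp.2, hpq⟩
  have hw : otherNeighbor C a b ∈ C ∧ Comp a (otherNeighbor C a b) ∧ otherNeighbor C a b ≠ b := by
    rw [otherNeighbor, dif_pos hex]
    exact hex.choose_spec
  generalize otherNeighbor C a b = e at hw ⊢
  obtain ⟨hwC, hwa, hwb⟩ := hw
  refine ⟨hwC, hwa, hwb, fun v hv hav => ?_⟩
  rcases hmem b hb hab with rfl | rfl <;> rcases hmem v hv hav with rfl | rfl <;>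
    rcases hmem _ hwC hwa with h | h <;> simp_all

variable {x y : α} (hx : x ∈ C) (hy : y ∈ C) (hxy : Comp x y)
include hx hy hxy

theorem crownWalk_spec (k : ℕ) :
    crownWalk C x y k ∈ C ∧ crownWalk C x y (k + 1) ∈ C ∧
      Comp (crownWalk C x y (k + 1)) (crownWalk C x y k) := by
  induction k with
  | zero =>
    obtain ⟨h₁, h₂, -⟩ := hC.otherNeighbor_spec hx hy hxy
    exact ⟨hx, h₁, h₂.symm⟩
  | succ k ih =>
    obtain ⟨h₁, h₂, -⟩ := hC.otherNeighbor_spec ih.2.1 ih.1 ih.2.2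
    exact ⟨ih.2.1, h₁, h₂.symm⟩

theorem crownWalk_neighbor (k : ℕ) :
    crownWalk C x y (k + 2) ≠ crownWalk C x y k ∧ ∀ v ∈ C, Comp (crownWalk C x y (k + 1)) v →
      v = crownWalk C x y k ∨ v = crownWalk C x y (k + 2) := by
  obtain ⟨h₁, h₂, h₃⟩ := hC.crownWalk_spec hx hy hxy k
  obtain ⟨-, -, hne, hnbr⟩ := hC.otherNeighbor_spec h₂ h₁ h₃
  exact ⟨hne, hnbr⟩

theorem crownWalk_first_repeat {m j : ℕ} (hinj : InjOn (crownWalk C x y) (Iio m)) (hjm : j < m)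
    (hj : crownWalk C x y j = crownWalk C x y m) : j = 0 ∧ 3 ≤ m := by
  have hjm : j + 3 ≤ m := by
    by_contra
    obtain rfl | rfl : m = j + 1 ∨ m = j + 2 := by omega
    · exact (hC.crownWalk_spec hx hy hxy j).2.2.1 hj.symm
    · exact (hC.crownWalk_neighbor hx hy hxy j).1 hj.symm
  refine ⟨?_, by omega⟩
  obtain _ | j := j
  · rfl
  obtain ⟨m, rfl⟩ : ∃ m', m = m' + 1 := ⟨m - 1, by omega⟩
  -- the predecessor of `m` would be a third neighbour of `crownWalk C x y (j + 1)`
  have hc : Comp (crownWalk C x y (j + 1)) (crownWalk C x y m) :=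
    hj ▸ (hC.crownWalk_spec hx hy hxy m).2.2
  rcases (hC.crownWalk_neighbor hx hy hxy j).2 _ (hC.crownWalk_spec hx hy hxy m).1 hc with h | h
  · exact absurd (hinj (mem_Iio.2 (by omega)) (mem_Iio.2 (by omega)) h) (by omega)
  · exact absurd (hinj (mem_Iio.2 (by omega)) (mem_Iio.2 (by omega)) h) (by omega)

theorem crownWalk_periodic_of_eq {m : ℕ} (hinj : InjOn (crownWalk C x y) (Iio m)) (hm : 3 ≤ m)
    (h0 : crownWalk C x y 0 = crownWalk C x y m) : Periodic (crownWalk C x y) m := by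
  obtain ⟨m, rfl⟩ : ∃ m', m = m' + 1 := ⟨m - 1, by omega⟩
  have h1 : crownWalk C x y (m + 2) = crownWalk C x y 1 := by
    have hc : Comp (crownWalk C x y (m + 1)) (crownWalk C x y 1) :=
      h0 ▸ (hC.crownWalk_spec hx hy hxy 0).2.2.symm
    rcases (hC.crownWalk_neighbor hx hy hxy m).2 _ (hC.crownWalk_spec hx hy hxy 0).2.1 hc with
      h | h
    · exact absurd (hinj (mem_Iio.2 (by omega)) (mem_Iio.2 (by omega)) h) (by omega)
    · exact h.symm
  have hper : ∀ k, crownWalk C x y (k + (m + 1)) = crownWalk C x y k ∧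
      crownWalk C x y (k + 1 + (m + 1)) = crownWalk C x y (k + 1) := by
    intro k
    induction k with
    | zero => exact ⟨by simpa using h0.symm, by rwa [show 0 + 1 + (m + 1) = m + 2 by omega]⟩
    | succ k ih =>
      refine ⟨ih.2, ?_⟩
      rw [show k + 1 + 1 + (m + 1) = k + (m + 1) + 2 by omega]
      show otherNeighbor C (crownWalk C x y (k + (m + 1) + 1)) (crownWalk C x y (k + (m + 1))) =
        otherNeighbor C (crownWalk C x y (k + 1)) (crownWalk C x y k)
      rw [show k + (m + 1) + 1 = k + 1 + (m + 1) by omega, ih.1, ih.2]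
  exact fun k => (hper k).1

theorem crownWalk_periodic :
    ∃ m, 3 ≤ m ∧ Periodic (crownWalk C x y) m ∧ InjOn (crownWalk C x y) (Iio m) := by
  classical
  have hrep : ∃ m j, j < m ∧ crownWalk C x y j = crownWalk C x y m := by
    obtain ⟨j, m, hjm, h⟩ := Set.Finite.exists_lt_map_eq_of_forall_mem
      (fun k => (hC.crownWalk_spec hx hy hxy k).1) (finite_of_ncard_pos (by have := hC.1; omega))
    exact ⟨m, j, hjm, h⟩
  obtain ⟨j, hjm, hj⟩ := Nat.find_spec hrep
  have hinj : InjOn (crownWalk C x y) (Iio (Nat.find hrep)) := by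
    intro p hp q hq h
    by_contra hpq
    rcases lt_or_gt_of_ne hpq with hlt | hlt
    · exact Nat.find_min hrep hq ⟨p, hlt, h⟩
    · exact Nat.find_min hrep hp ⟨q, hlt, h.symm⟩
  obtain ⟨rfl, hm⟩ := hC.crownWalk_first_repeat hx hy hxy hinj hjm hj
  exact ⟨_, hm, hC.crownWalk_periodic_of_eq hx hy hxy hinj hm hj, hinj⟩

theorem exists_bijOn_path : ∃ c : ℕ → α, BijOn c (Iio C.ncard) C ∧ c 0 = x ∧
    c (C.ncard - 1) = y ∧ ∀ i, i + 1 < C.ncard → Comp (c i) (c (i + 1)) := by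
  obtain ⟨m, hm3, hper, hinj⟩ := hC.crownWalk_periodic hx hy hxy
  have hnbr : ∀ i, ∀ v ∈ C, Comp (crownWalk C x y i) v →
      v = crownWalk C x y (i + m - 1) ∨ v = crownWalk C x y (i + m + 1) := fun i v hv hc => by
    rw [← hper i, show i + m = i + m - 1 + 1 by omega] at hc
    rw [show i + m + 1 = i + m - 1 + 2 by omega]
    exact (hC.crownWalk_neighbor hx hy hxy _).2 v hv hc
  have hrange : range (crownWalk C x y) = C := by
    refine (range_subset_iff.2 fun k => (hC.crownWalk_spec hx hy hxy k).1).antisymm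
      fun v hv => ?_
    have hreach := hC.2.2 x hx v hv
    clear hv
    induction hreach with
    | refl => exact ⟨0, rfl⟩
    | tail _ hstep ih =>
      obtain ⟨i, rfl⟩ := ih
      rcases hnbr i _ hstep.2.1 hstep.2.2 with h | h <;> exact ⟨_, h.symm⟩
  have himage : crownWalk C x y '' Iio m = C := by
    refine (image_subset_range _ _).trans hrange.le |>.antisymm fun v hv => ?_
    obtain ⟨k, rfl⟩ := hrange ▸ hv
    exact ⟨k % m, mem_Iio.2 (Nat.mod_lt k (by omega)), hper.map_mod_nat k⟩
  have hcard : C.ncard = m := by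
    rw [← himage, hinj.ncard_image, ← Finset.coe_range, ncard_coe_finset, Finset.card_range]
  have hlast : crownWalk C x y (m - 1) = y := by
    obtain ⟨-, -, hne, -⟩ := hC.otherNeighbor_spec hx hy hxy
    have := hnbr 0 y hy hxy
    rw [zero_add, show m + 1 = 1 + m by omega, hper 1] at this
    exact (this.resolve_right fun h => hne h.symm).symm
  rw [hcard]
  exact ⟨crownWalk C x y, ⟨fun k _ => (hC.crownWalk_spec hx hy hxy k).1, hinj, himage.symm.le⟩,
    rfl, hlast, fun i _ => (hC.crownWalk_spec hx hy hxy i).2.2.symm⟩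

end IsCrown

variable {x y : α} {d : α → ℕ}

theorem IsFenceDist.le_succ_of_forall_isCrown (hP : IsFlatPoset α) (hxy : x < y)
    (hd : IsFenceDist (Rminus x y) x d) {n : ℕ}
    (hmin : ∀ C : Set α, IsCrown C → x ∈ C → y ∈ C → n ≤ C.ncard) : n ≤ d y + 1 := by
  have hodd : ¬ Even (d y) := by
    rw [← hd.isMin_iff_even hP (fun _ _ h => h.1) (hP.isMin_of_lt hxy)]
    exact not_isMin_of_lt hxy
  obtain ⟨g, hg, h0, hy⟩ := hd.exists_isFence y
  have hne₁ : d y ≠ 1 := fun h => by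
    have hc := hg.2.1 0 (by omega)
    rw [h0, zero_add, ← h, hy] at hc
    exact hc.2.elim (fun h => h.2 ⟨rfl, rfl⟩) fun h => hxy.not_ge h.1
  have h3 : 3 ≤ d y := by
    have : d y ≠ 0 := fun h => hodd (h ▸ ⟨0, rfl⟩)
    have : d y ≠ 2 := fun h => hodd (h ▸ ⟨1, rfl⟩)
    omega
  have := hmin _ (isCrown_of_isFence_rminus (comp_of_lt hxy) h3 hg h0 hy) ⟨0, h0⟩
    ⟨Fin.last _, hy⟩
  rwa [ncard_range_of_injective hg.injective_fin, Nat.card_eq_fintype_card,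
    Fintype.card_fin] at this

theorem IsFenceDist.apply_eq_of_path (hxy : x < y) (hd : IsFenceDist (Rminus x y) x d)
    {n : ℕ} {c : ℕ → α} (hinj : InjOn c (Iio n)) (hn : 3 ≤ n) (hc0 : c 0 = x)
    (hcy : c (n - 1) = y) (hcomp : ∀ i, i + 1 < n → Comp (c i) (c (i + 1)))
    (hyn : n ≤ d y + 1) : ∀ i < n, d (c i) = i := by
  have hpath : ∀ i, i + 1 < n → CompR (Rminus x y) (c i) (c (i + 1)) := by
    intro i hi
    have hidx : ∀ {j k}, j < n → k < n → c j = c k → j = k := fun hj hk h => hinj hj hk h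
    rcases (comp_iff_compR_rminus (comp_of_lt hxy)).1 (hcomp i hi) with h | ⟨h₁, h₂⟩ | ⟨h₁, h₂⟩
    · exact h
    · have := hidx (by omega) (by omega) (h₁.trans hc0.symm)
      have := hidx (by omega) (by omega) (h₂.trans hcy.symm)
      omega
    · have := hidx (by omega) (by omega) (h₁.trans hcy.symm)
      omega
  intro i hi
  have h₁ : d (c i) ≤ d (c 0) + i :=
    (hd.le_add_of_chain (p := c) fun t ht => hpath t (by omega)).1
  have h₂ : d y ≤ d (c i) + (n - 1 - i) := by
    simpa [show i + (n - 1 - i) = n - 1 by omega, hcy] using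
      (hd.le_add_of_chain (p := fun t => c (i + t)) (l := n - 1 - i)
        fun t ht => hpath (i + t) (by omega)).1
  rw [hc0, hd.apply_self] at h₁
  omega

end Order

section Retraction

variable {C : Set α} {d : α → ℕ} {c : ℕ → α} {r : α → α} (hbij : BijOn c (Iio C.ncard) C)
  (hdc : ∀ i < C.ncard, d (c i) = i) (hr1 : ∀ z, d z ≤ C.ncard → r z ∈ C ∧ d (r z) = d z)
include hbij hdc hr1

theorem lt_ncard_and_eq_of_le {z : α} (hz : d z ≤ C.ncard) : d z < C.ncard ∧ r z = c (d z) := by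
  obtain ⟨hrz, hdr⟩ := hr1 z hz
  obtain ⟨i, hi, hci⟩ := hbij.surjOn hrz
  rw [← hci, hdc i hi] at hdr
  exact hdr ▸ ⟨hi, hci.symm⟩

theorem apply_eq_self_of_mem {w : α} (hw : w ∈ C) : r w = w := by
  obtain ⟨i, hi, rfl⟩ := hbij.surjOn hw
  have hci := hdc i hi
  rw [(lt_ncard_and_eq_of_le hbij hdc hr1 (hci.trans_le (le_of_lt hi))).2, hci]

theorem monotone_of_path [PartialOrder α] {x y : α} (hP : IsFlatPoset α) (hxy : x < y)
    (hd : IsFenceDist (Rminus x y) x d) (hx : x ∈ C) (hy : y ∈ C) (hcomp : ∀ i, i + 1 < C.ncard → Comp (c i) (c (i + 1)))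
    (hr2 : ∀ z, C.ncard < d z → r z = y) : Monotone r := by
  have hpar := hd.isMin_iff_even hP (fun _ _ h => h.1) (hP.isMin_of_lt hxy)
  intro u v huv
  rcases huv.eq_or_lt with rfl | hlt
  · exact le_rfl
  by_cases hedge : u = x ∧ v = y
  · rw [hedge.1, hedge.2, apply_eq_self_of_mem hbij hdc hr1 hx,
      apply_eq_self_of_mem hbij hdc hr1 hy]
    exact hxy.le
  have hc : CompR (Rminus x y) u v := ⟨hlt.ne, Or.inl ⟨huv, hedge⟩⟩
  have h₁ := hd.le_succ_of_compR hc
  have h₂ := hd.le_succ_of_compR hc.symm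
  have hu : Even (d u) := (hpar u).1 (hP.isMin_of_lt hlt)
  have huv : d u ≠ d v := fun h => (hpar v).not.1 (not_isMin_of_lt hlt) (h ▸ hu)
  rcases le_or_gt (d u) C.ncard with hun | hun <;> rcases le_or_gt (d v) C.ncard with hvn | hvn
  · obtain ⟨hun', hru⟩ := lt_ncard_and_eq_of_le hbij hdc hr1 hun
    obtain ⟨hvn', hrv⟩ := lt_ncard_and_eq_of_le hbij hdc hr1 hvn
    have hcuv : Comp (r u) (r v) := by
      rw [hru, hrv]
      rcases (show d v = d u + 1 ∨ d u = d v + 1 by omega) with h | h <;> rw [h]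
      · exact hcomp _ (by omega)
      · exact (hcomp _ (by omega)).symm
    have hmin : IsMin (r u) := (hpar _).2 ((hr1 u hun).2 ▸ hu)
    exact hcuv.2.elim id fun h => hmin h
  · have := (lt_ncard_and_eq_of_le hbij hdc hr1 hun).1
    omega
  · have := (lt_ncard_and_eq_of_le hbij hdc hr1 hvn).1
    omega
  · rw [hr2 u hun, hr2 v hvn]

end Retraction

end

theorem stmt12_general {α : Type*} [PartialOrder α]
    (hflat : IsFlatPoset α)
    (C : Set α) (n : ℕ) (hC : IsCrown C) (hn : C.ncard = n)
    (x y : α) (hx : x ∈ C) (hy : y ∈ C) (hxy : x < y)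
    (hmin : ∀ C' : Set α, IsCrown C' → x ∈ C' → y ∈ C' → n ≤ C'.ncard)
    (d : α → ℕ)
    (hd : ∀ z : α, IsLeast {k : ℕ | ∃ f : Fin (k + 1) → α,
      IsFenceSeq (Rminus x y) k f ∧ x ∈ Set.range f ∧ z ∈ Set.range f} (d z))
    (r : α → α)
    (hr1 : ∀ z : α, d z ≤ n → r z ∈ C ∧ d (r z) = d z)
    (hr2 : ∀ z : α, n < d z → r z = y) :
    (∀ z : α, d z ≤ n → ∃! c : α, c ∈ C ∧ d c = d z) ∧
    Monotone r ∧ (∀ z, r (r z) = r z) ∧ Set.range r = C := by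
  subst hn
  have hd : IsFenceDist (Rminus x y) x d := hd
  obtain ⟨c, hbij, hc0, hcy, hcomp⟩ := hC.exists_bijOn_path hx hy (comp_of_lt hxy)
  have hdc : ∀ i < C.ncard, d (c i) = i := hd.apply_eq_of_path hxy hbij.injOn
    (by have := hC.1; omega) hc0 hcy hcomp (hd.le_succ_of_forall_isCrown hflat hxy hmin)
  have hr : ∀ z, r z ∈ C := fun z => (le_or_gt (d z) C.ncard).elim (fun h => (hr1 z h).1)
    fun h => hr2 z h ▸ hy
  refine ⟨fun z hz => ?_, monotone_of_path hbij hdc hr1 hflat hxy hd hx hy hcomp hr2,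
    fun z => apply_eq_self_of_mem hbij hdc hr1 (hr z),
    (range_subset_iff.2 hr).antisymm fun w hw => ⟨w, apply_eq_self_of_mem hbij hdc hr1 hw⟩⟩
  have hz' := (lt_ncard_and_eq_of_le hbij hdc hr1 hz).1
  refine ⟨c (d z), ⟨hbij.mapsTo hz', hdc _ hz'⟩, fun w ⟨hw, hwz⟩ => ?_⟩
  obtain ⟨i, hi, rfl⟩ := hbij.surjOn hw
  rw [← hwz, hdc i hi]

/-- Rival's retraction lemma: with `C` an `n`-crown of minimal
size among crowns containing `x < y`, `d z` the least length of a fence of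
`P⁻` containing `x` and `z`, the map sending `z` to the unique `c ∈ C` with
`d c = d z` when `d z ≤ n` and to `y` otherwise is a retraction onto `C`. -/
theorem stmt12 {α : Type*} [PartialOrder α] [Fintype α]
    (hconn : ConnectedPoset α) (hflat : IsFlatPoset α)
    (C : Set α) (n : ℕ) (hC : IsCrown C) (hn : C.ncard = n)
    (x y : α) (hx : x ∈ C) (hy : y ∈ C) (hxy : x < y)
    (hmin : ∀ C' : Set α, IsCrown C' → x ∈ C' → y ∈ C' → n ≤ C'.ncard)
    (d : α → ℕ)
    (hd : ∀ z : α, IsLeast {k : ℕ | ∃ f : Fin (k + 1) → α,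
      IsFenceSeq (Rminus x y) k f ∧ x ∈ Set.range f ∧ z ∈ Set.range f} (d z))
    (r : α → α)
    (hr1 : ∀ z : α, d z ≤ n → r z ∈ C ∧ d (r z) = d z)
    (hr2 : ∀ z : α, n < d z → r z = y) :
    (∀ z : α, d z ≤ n → ∃! c : α, c ∈ C ∧ d c = d z) ∧
    Monotone r ∧ (∀ z, r (r z) = r z) ∧ Set.range r = C :=
  stmt12_general hflat C n hC hn x y hx hy hxy hmin d hd r hr1 hr2
end
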